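/- Let G be a finite signed graph whose maximum vertex degree Δ (in the underlying graph with edge set E⁺ ∪ E⁻) satisfies Δ ≥ 1, and let β ∈ (0, 1]. Suppose G₁ = G[V₁] is an induced subgraph of G that is balanced under β-tolerance and has the maximum number of vertices among all induced subgraphs of G balanced under β-tolerance, and G₂ = G[V₂] is an induced subgraph of G that is balanced under β-tolerance and has the maximum number of edges among all induced subgraphs of G balanced under β-tolerance. Then |V₂| ≥ |V₁| / Δ; that is, the solution to the edge-maximization problem TMBS-E is a (1/Δ)-approximation for the vertex-maximization problem TMBS-V. -/

import Mathlib

noncomputable section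

/-- A finite signed graph: disjoint finite sets of positive and negative
edges (unordered pairs of distinct vertices) on a vertex type `V`. -/
structure SignedGraph (V : Type*) where
  Epos : Set (Sym2 V)
  Eneg : Set (Sym2 V)
  finite : (Epos ∪ Eneg).Finite
  disj : Disjoint Epos Eneg
  loopless : ∀ e ∈ Epos ∪ Eneg, ¬ e.IsDiag

namespace SignedGraph

variable {V : Type*}

/-- The set of all edges `E⁺ ∪ E⁻`. -/
def edges (G : SignedGraph V) : Set (Sym2 V) := G.Epos ∪ G.Eneg

/-- `|E⁺ ∪ E⁻|`, the number of edges. -/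
def numEdges (G : SignedGraph V) : ℕ := G.edges.ncard

/-- The underlying (unsigned) simple graph. -/
def underlying (G : SignedGraph V) : SimpleGraph V :=
  SimpleGraph.fromEdgeSet G.edges

/-- A signed graph is connected if its underlying simple graph is connected. -/
def Connected (G : SignedGraph V) : Prop := G.underlying.Connected

/-- An edge is frustrated under a coloring `x : V → Bool` if it is positive and
its endpoints receive different colors, or negative and its endpoints receive
the same color. -/
def IsFrustrated (G : SignedGraph V) (x : V → Bool) (e : Sym2 V) : Prop :=
  (e ∈ G.Epos ∧ ∀ a b, e = s(a, b) → x a ≠ x b) ∨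
  (e ∈ G.Eneg ∧ ∀ a b, e = s(a, b) → x a = x b)

/-- The set of edges frustrated under the coloring `x`. -/
def frustratedEdges (G : SignedGraph V) (x : V → Bool) : Set (Sym2 V) :=
  {e | G.IsFrustrated x e}

/-- `f(G,x)`: the number of edges frustrated under the coloring `x`. -/
def frustCount (G : SignedGraph V) (x : V → Bool) : ℕ :=
  (G.frustratedEdges x).ncard

/-- A signed graph is balanced if it is connected and the vertices can be
partitioned into two classes (the fibers of a two-coloring) so that every
positive edge joins vertices in the same class and every negative edge joins
vertices in different classes. -/
def Balanced (G : SignedGraph V) : Prop :=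
  G.Connected ∧ ∃ x : V → Bool,
    (∀ e ∈ G.Epos, ∀ a b, e = s(a, b) → x a = x b) ∧
    (∀ e ∈ G.Eneg, ∀ a b, e = s(a, b) → x a ≠ x b)

/-- Delete a set `F` of edges from a signed graph. -/
def deleteEdges (G : SignedGraph V) (F : Set (Sym2 V)) : SignedGraph V where
  Epos := G.Epos \ F
  Eneg := G.Eneg \ F
  finite := G.finite.subset (Set.union_subset_union Set.diff_subset Set.diff_subset)
  disj := G.disj.mono Set.diff_subset Set.diff_subset
  loopless := fun e he =>
    G.loopless e (Set.union_subset_union Set.diff_subset Set.diff_subset he)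

/-- The induced signed subgraph on a set `S` of vertices. -/
def induce (G : SignedGraph V) (S : Set V) : SignedGraph S where
  Epos := {e : Sym2 S | e.map Subtype.val ∈ G.Epos}
  Eneg := {e : Sym2 S | e.map Subtype.val ∈ G.Eneg}
  finite := by
    have h : {e : Sym2 S | e.map Subtype.val ∈ G.Epos} ∪
        {e : Sym2 S | e.map Subtype.val ∈ G.Eneg} =
        Sym2.map (Subtype.val : S → V) ⁻¹' (G.Epos ∪ G.Eneg) := by
      ext e; simp [Set.mem_union, Set.mem_preimage]
    rw [h]
    exact G.finite.preimage ((Sym2.map.injective Subtype.val_injective).injOn)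
  disj := by
    rw [Set.disjoint_left]
    intro e he₁ he₂
    exact Set.disjoint_left.mp G.disj he₁ he₂
  loopless := by
    intro e he hdiag
    have hmem : e.map (Subtype.val : S → V) ∈ G.Epos ∪ G.Eneg := by
      rcases he with h | h
      · exact Or.inl h
      · exact Or.inr h
    apply G.loopless _ hmem
    induction e using Sym2.ind with
    | _ a b =>
      rw [Sym2.mk_isDiag_iff] at hdiag
      rw [Sym2.map_pair_eq, Sym2.mk_isDiag_iff]
      exact congrArg _ hdiag

/-- Every connected component of the signed graph is balanced (as the induced
signed subgraph on the component's vertex set). -/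
def ComponentsBalanced (G : SignedGraph V) : Prop :=
  ∀ c : G.underlying.ConnectedComponent, (G.induce c.supp).Balanced

/-- The frustration index `L(G)`: the minimum number of edges whose deletion
makes every connected component of the remaining graph balanced. -/
def frustrationIndex (G : SignedGraph V) : ℕ :=
  sInf {k | ∃ F ⊆ G.edges, F.ncard = k ∧ (G.deleteEdges F).ComponentsBalanced}

/-- The Tolerant Balance Index `Φ(G, β) = |E⁺ ∪ E⁻| − L(G)/β`. -/
def TBI (G : SignedGraph V) (β : ℝ) : ℝ :=
  (G.numEdges : ℝ) - (G.frustrationIndex : ℝ) / β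

/-- The Tolerant Balance Count `Φ̂(G, β, x) = |E⁺ ∪ E⁻| − f(G,x)/β`. -/
def TBC (G : SignedGraph V) (β : ℝ) (x : V → Bool) : ℝ :=
  (G.numEdges : ℝ) - (G.frustCount x : ℝ) / β

/-- `G` is balanced under `β`-tolerance: `G` is connected and
`L(G) ≤ β·|E⁺ ∪ E⁻|`. -/
def BalancedWithTolerance (G : SignedGraph V) (β : ℝ) : Prop :=
  G.Connected ∧ (G.frustrationIndex : ℝ) ≤ β * (G.numEdges : ℝ)

end SignedGraph

/-- The degree of a vertex in the underlying graph: the number of edges of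
`E⁺ ∪ E⁻` containing it. -/
def SignedGraph.degree {V : Type*} (G : SignedGraph V) (v : V) : ℕ :=
  {e ∈ G.edges | v ∈ e}.ncard

/-! A connected graph on `n` vertices has at least `n - 1` edges, so
`|V₁| ≤ m(G[V₁]) + 1 ≤ m(G[V₂]) + 1`, the second step by maximality of `G[V₂]`.
Degrees in `G[V₂]` are at most `Δ`, so the handshake lemma gives `2 m(G[V₂]) ≤ Δ |V₂|`.
Since `G[V₂]` is connected, `|V₂| ≥ 1`, and together `|V₁| ≤ Δ |V₂|`. -/

namespace SignedGraph

variable {V : Type*}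

theorem underlying_edgeSet (G : SignedGraph V) : G.underlying.edgeSet = G.edges := by
  rw [underlying, SimpleGraph.edgeSet_fromEdgeSet, sdiff_eq_left]
  exact Set.disjoint_left.2 fun e he hdiag => G.loopless e he hdiag

theorem Connected.card_le_numEdges_add_one {G : SignedGraph V} (hG : G.Connected) :
    Nat.card V ≤ G.numEdges + 1 := by
  simpa [← underlying_edgeSet, numEdges, Nat.card_coe_set_eq] using
    SimpleGraph.Connected.card_vert_le_card_edgeSet_add_one hG

theorem degree_eq_underlying_degree (G : SignedGraph V) (v : V)
    [Fintype (G.underlying.neighborSet v)] : G.degree v = G.underlying.degree v := by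
  classical
  rw [← SimpleGraph.card_incidenceSet_eq_degree, ← Nat.card_eq_fintype_card,
    Nat.card_coe_set_eq, degree, SimpleGraph.incidenceSet, underlying_edgeSet]

theorem two_mul_numEdges_le [Finite V] (G : SignedGraph V) {D : ℕ}
    (hD : ∀ v, G.degree v ≤ D) : 2 * G.numEdges ≤ D * Nat.card V := by
  classical
  have := Fintype.ofFinite V
  calc 2 * G.numEdges = ∑ v, G.underlying.degree v := by
        rw [SimpleGraph.sum_degrees_eq_twice_card_edges, ← SimpleGraph.card_edgeSet,
          ← Nat.card_eq_fintype_card, Nat.card_coe_set_eq, underlying_edgeSet, numEdges]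
    _ ≤ ∑ _v : V, D := Finset.sum_le_sum fun v _ => degree_eq_underlying_degree G v ▸ hD v
    _ = D * Nat.card V := by simp [Nat.card_eq_fintype_card, mul_comm]

theorem degree_induce_le (G : SignedGraph V) (S : Set V) (v : S) :
    (G.induce S).degree v ≤ G.degree v := by
  have hfin : {e ∈ G.edges | (v : V) ∈ e}.Finite := G.finite.subset fun e he => he.1
  calc (G.induce S).degree v
      = (Sym2.map Subtype.val '' {e ∈ (G.induce S).edges | v ∈ e}).ncard :=
        (Set.ncard_image_of_injective _ (Sym2.map.injective Subtype.val_injective)).symm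
    _ ≤ G.degree v := by
        refine Set.ncard_le_ncard ?_ hfin
        rintro _ ⟨e, ⟨he, hv⟩, rfl⟩
        exact ⟨he, Sym2.mem_map.2 ⟨v, hv, rfl⟩⟩

end SignedGraph

theorem SignedGraph.tmbsE_approx_tmbsV_general {V : Type*} [Fintype V] (G : SignedGraph V)
    (β : ℝ)
    (Δ : ℕ) (hΔmax : IsGreatest (Set.range G.degree) Δ) (hΔ : 1 ≤ Δ)
    (V₁ V₂ : Set V)
    (h₁bal : (G.induce V₁).BalancedWithTolerance β)
    (h₂bal : (G.induce V₂).BalancedWithTolerance β)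
    (h₂max : ∀ S : Set V, (G.induce S).BalancedWithTolerance β →
      (G.induce S).numEdges ≤ (G.induce V₂).numEdges) :
    (V₁.ncard : ℝ) / (Δ : ℝ) ≤ (V₂.ncard : ℝ) := by
  have hV₁ : V₁.ncard ≤ (G.induce V₁).numEdges + 1 := by
    simpa [Nat.card_coe_set_eq] using h₁bal.1.card_le_numEdges_add_one
  have hm := h₂max V₁ h₁bal
  have hV₂ : 2 * (G.induce V₂).numEdges ≤ Δ * V₂.ncard := by
    simpa [Nat.card_coe_set_eq] using (G.induce V₂).two_mul_numEdges_le fun v =>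
      (G.degree_induce_le V₂ v).trans (hΔmax.2 ⟨v, rfl⟩)
  have hV₂pos : 0 < V₂.ncard := by
    obtain ⟨v⟩ := h₂bal.1.nonempty
    exact (Set.ncard_pos V₂.toFinite).2 ⟨v, v.2⟩
  have hΔV₂ : 1 ≤ Δ * V₂.ncard := Nat.mul_pos hΔ hV₂pos
  have hkey : V₁.ncard ≤ Δ * V₂.ncard := by omega
  rw [div_le_iff₀ (by exact_mod_cast hΔ), mul_comm]
  exact_mod_cast hkey

/-- If `Δ ≥ 1` is the maximum vertex degree of a finite signed
graph `G`, `β ∈ (0,1]`, `G[V₁]` is an induced subgraph balanced under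
`β`-tolerance with the maximum number of vertices, and `G[V₂]` is an induced
subgraph balanced under `β`-tolerance with the maximum number of edges, then
`|V₂| ≥ |V₁|/Δ`: the TMBS-E optimum is a `(1/Δ)`-approximation for TMBS-V. -/
theorem SignedGraph.tmbsE_approx_tmbsV {V : Type*} [Fintype V] (G : SignedGraph V)
    (β : ℝ) (hβ0 : 0 < β) (hβ1 : β ≤ 1)
    (Δ : ℕ) (hΔmax : IsGreatest (Set.range G.degree) Δ) (hΔ : 1 ≤ Δ)
    (V₁ V₂ : Set V)
    (h₁bal : (G.induce V₁).BalancedWithTolerance β)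
    (h₁max : ∀ S : Set V, (G.induce S).BalancedWithTolerance β → S.ncard ≤ V₁.ncard)
    (h₂bal : (G.induce V₂).BalancedWithTolerance β)
    (h₂max : ∀ S : Set V, (G.induce S).BalancedWithTolerance β →
      (G.induce S).numEdges ≤ (G.induce V₂).numEdges) :
    (V₁.ncard : ℝ) / (Δ : ℝ) ≤ (V₂.ncard : ℝ) :=
  SignedGraph.tmbsE_approx_tmbsV_general G β Δ hΔmax hΔ V₁ V₂ h₁bal h₂bal h₂max
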